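/- arXiv:2603.15384 — 2 statements merged into one kernel-verified Lean document; each statement's English description precedes it below -/
import Mathlib

section
/- For all integrable measures μ, ν on X, POT₁(μ, ν) ≤ OT₁(μ ⊕_Δ ν, ν ⊕_Δ μ) ≤ 2·POT₁(μ, ν), where POT₁ is the partial optimal transport distance with deletion-to-diagonal cost, and OT₁ is the 1-Wasserstein distance on X̄ with ground cost ‖·‖_∞. -/
/-!
A partial plan `γ` between `μ` and `ν` extends to a coupling of `μ + π_Δ#ν` with
`ν + π_Δ#μ`: keep `γ`, send the unmatched mass of `μ` and of `ν` to its diagonal projection,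
and couple `π_Δ#γ₂` back to `π_Δ#γ₁` along `(p, q) ↦ (π_Δ q, π_Δ p)`. As `π_Δ` is
`1`-Lipschitz for `‖·‖_∞`, this last piece costs at most the cost of `γ`, whence the factor `2`.

Conversely, as `π_Δ#μ` and `π_Δ#ν` live on `Δ`, a coupling `Γ` restricted to `X × X` is a
partial plan, and `Γ` moves the rest of `μ` (resp. `ν`) to points of `Δ`; this costs at least
the distance to `π_Δ`, the nearest point of `Δ`.
-/

open MeasureTheory ENNReal

/-- The `ℓ∞` distance on `ℝ²`. -/
noncomputable def dinf (p q : ℝ × ℝ) : ℝ := max |p.1 - q.1| |p.2 - q.2|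

/-- The diagonal projection (in the `ℓ∞` norm) `π_Δ(x,y) = ((x+y)/2,(x+y)/2)`. -/
noncomputable def piD (p : ℝ × ℝ) : ℝ × ℝ := ((p.1 + p.2) / 2, (p.1 + p.2) / 2)

/-- The Euclidean norm of a point of `ℝ²`. -/
noncomputable def enorm2 (p : ℝ × ℝ) : ℝ := Real.sqrt (p.1 ^ 2 + p.2 ^ 2)

/-- The cost of a partial transport plan `γ` between `μ` and `ν`: transported mass pays
the `ℓ∞` distance, unmatched mass is sent to the diagonal at persistence cost. -/
noncomputable def planCost (γ : Measure ((ℝ × ℝ) × (ℝ × ℝ))) (μ ν : Measure (ℝ × ℝ)) :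
    ℝ≥0∞ :=
  (∫⁻ z, ENNReal.ofReal (dinf z.1 z.2) ∂γ) +
  (∫⁻ p, ENNReal.ofReal (dinf p (piD p)) ∂(μ - γ.map Prod.fst)) +
  (∫⁻ q, ENNReal.ofReal (dinf q (piD q)) ∂(ν - γ.map Prod.snd))

/-- The partial optimal transport distance `POT₁(μ,ν)`. -/
noncomputable def POT (μ ν : Measure (ℝ × ℝ)) : ℝ≥0∞ :=
  ⨅ γ : {γ : Measure ((ℝ × ℝ) × (ℝ × ℝ)) //
      γ.map Prod.fst ≤ μ ∧ γ.map Prod.snd ≤ ν}, planCost γ.1 μ ν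

/-- The 1-Wasserstein distance (with `ℓ∞` ground cost) between two positive measures. -/
noncomputable def OT (η₁ η₂ : Measure (ℝ × ℝ)) : ℝ≥0∞ :=
  ⨅ Γ : {Γ : Measure ((ℝ × ℝ) × (ℝ × ℝ)) //
      Γ.map Prod.fst = η₁ ∧ Γ.map Prod.snd = η₂},
    ∫⁻ z, ENNReal.ofReal (dinf z.1 z.2) ∂Γ.1

lemma dinf_comm (p q : ℝ × ℝ) : dinf p q = dinf q p := by
  unfold dinf
  rw [abs_sub_comm, abs_sub_comm p.2]

lemma dinf_piD_le_dinf_diag (p : ℝ × ℝ) (t : ℝ) : dinf p (piD p) ≤ dinf p (t, t) := by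
  simp only [dinf, piD]
  obtain ⟨h₁, h₁'⟩ := abs_le.mp (le_max_left |p.1 - t| |p.2 - t|)
  obtain ⟨h₂, h₂'⟩ := abs_le.mp (le_max_right |p.1 - t| |p.2 - t|)
  exact max_le (abs_le.mpr ⟨by linarith, by linarith⟩) (abs_le.mpr ⟨by linarith, by linarith⟩)

lemma dinf_piD_piD_le (p q : ℝ × ℝ) : dinf (piD p) (piD q) ≤ dinf p q := by
  simp only [dinf, piD, max_self]
  obtain ⟨h₁, h₁'⟩ := abs_le.mp (le_max_left |p.1 - q.1| |p.2 - q.2|)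
  obtain ⟨h₂, h₂'⟩ := abs_le.mp (le_max_right |p.1 - q.1| |p.2 - q.2|)
  exact abs_le.mpr ⟨by linarith, by linarith⟩

@[fun_prop]
lemma measurable_piD : Measurable piD := by
  unfold piD
  fun_prop

lemma measurable_dinf : Measurable fun z : (ℝ × ℝ) × (ℝ × ℝ) => dinf z.1 z.2 := by
  unfold dinf
  fun_prop

lemma measurable_dinf_piD : Measurable fun p : ℝ × ℝ => dinf p (piD p) :=
  measurable_dinf.comp (measurable_id.prodMk measurable_piD)

section UpperBound

variable {μ ν : Measure (ℝ × ℝ)} {γ : Measure ((ℝ × ℝ) × (ℝ × ℝ))}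

noncomputable def crossPlan (γ : Measure ((ℝ × ℝ) × (ℝ × ℝ))) (μ ν : Measure (ℝ × ℝ)) :
    Measure ((ℝ × ℝ) × (ℝ × ℝ)) :=
  γ + (μ - γ.map Prod.fst).map (fun p => (p, piD p))
    + (ν - γ.map Prod.snd).map (fun q => (piD q, q)) + γ.map (fun z => (piD z.2, piD z.1))

lemma map_fst_crossPlan [IsFiniteMeasure μ] [IsFiniteMeasure ν] (hγμ : γ.map Prod.fst ≤ μ)
    (hγν : γ.map Prod.snd ≤ ν) : (crossPlan γ μ ν).map Prod.fst = μ + ν.map piD := by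
  have := isFiniteMeasure_of_le μ hγμ
  have := isFiniteMeasure_of_le ν hγν
  simp only [crossPlan, Measure.map_add _ _ measurable_fst]
  rw [Measure.map_map measurable_fst (by fun_prop), Measure.map_map measurable_fst (by fun_prop),
    Measure.map_map measurable_fst (by fun_prop)]
  change γ.map Prod.fst + (μ - γ.map Prod.fst).map id + (ν - γ.map Prod.snd).map piD
    + γ.map (piD ∘ Prod.snd) = _
  rw [Measure.map_id, ← Measure.map_map measurable_piD measurable_snd]
  calc _ = (γ.map Prod.fst + (μ - γ.map Prod.fst))
        + (ν - γ.map Prod.snd + γ.map Prod.snd).map piD := by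
        rw [Measure.map_add _ _ measurable_piD]; ac_rfl
    _ = μ + ν.map piD := by
        rw [add_comm (γ.map _), Measure.sub_add_cancel_of_le hγμ,
          Measure.sub_add_cancel_of_le hγν]

lemma map_snd_crossPlan [IsFiniteMeasure μ] [IsFiniteMeasure ν] (hγμ : γ.map Prod.fst ≤ μ)
    (hγν : γ.map Prod.snd ≤ ν) : (crossPlan γ μ ν).map Prod.snd = ν + μ.map piD := by
  have := isFiniteMeasure_of_le μ hγμ
  have := isFiniteMeasure_of_le ν hγν
  simp only [crossPlan, Measure.map_add _ _ measurable_snd]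
  rw [Measure.map_map measurable_snd (by fun_prop), Measure.map_map measurable_snd (by fun_prop),
    Measure.map_map measurable_snd (by fun_prop)]
  change γ.map Prod.snd + (μ - γ.map Prod.fst).map piD + (ν - γ.map Prod.snd).map id
    + γ.map (piD ∘ Prod.fst) = _
  rw [Measure.map_id, ← Measure.map_map measurable_piD measurable_fst]
  calc _ = (γ.map Prod.snd + (ν - γ.map Prod.snd))
        + (μ - γ.map Prod.fst + γ.map Prod.fst).map piD := by
        rw [Measure.map_add _ _ measurable_piD]; ac_rfl
    _ = ν + μ.map piD := by
        rw [add_comm (γ.map _), Measure.sub_add_cancel_of_le hγν,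
          Measure.sub_add_cancel_of_le hγμ]

lemma lintegral_dinf_crossPlan_le (γ : Measure ((ℝ × ℝ) × (ℝ × ℝ))) (μ ν : Measure (ℝ × ℝ)) :
    ∫⁻ z, ENNReal.ofReal (dinf z.1 z.2) ∂crossPlan γ μ ν ≤ 2 * planCost γ μ ν := by
  have hcost := measurable_dinf.ennreal_ofReal
  simp only [crossPlan, lintegral_add_measure]
  rw [lintegral_map hcost (by fun_prop), lintegral_map hcost (by fun_prop),
    lintegral_map hcost (by fun_prop)]
  have hdel : ∫⁻ q, ENNReal.ofReal (dinf (piD q) q) ∂(ν - γ.map Prod.snd)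
      = ∫⁻ q, ENNReal.ofReal (dinf q (piD q)) ∂(ν - γ.map Prod.snd) :=
    lintegral_congr fun q => by rw [dinf_comm]
  have hproj : ∫⁻ z, ENNReal.ofReal (dinf (piD z.2) (piD z.1)) ∂γ
      ≤ ∫⁻ z, ENNReal.ofReal (dinf z.1 z.2) ∂γ :=
    lintegral_mono fun z => ofReal_le_ofReal <| (dinf_comm _ _).trans_le (dinf_piD_piD_le _ _)
  calc _ = planCost γ μ ν + ∫⁻ z, ENNReal.ofReal (dinf (piD z.2) (piD z.1)) ∂γ := by
        rw [planCost, ← hdel]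
    _ ≤ planCost γ μ ν + planCost γ μ ν := by
        gcongr
        exact hproj.trans (le_add_right (le_add_right le_rfl))
    _ = 2 * planCost γ μ ν := (two_mul _).symm

theorem OT_le_two_mul_POT [IsFiniteMeasure μ] [IsFiniteMeasure ν] :
    OT (μ + ν.map piD) (ν + μ.map piD) ≤ 2 * POT μ ν := by
  rw [POT, ENNReal.mul_iInf_of_ne two_ne_zero ofNat_ne_top]
  refine le_iInf fun ⟨γ, hγμ, hγν⟩ => iInf_le_of_le
    ⟨crossPlan γ μ ν, map_fst_crossPlan hγμ hγν, map_snd_crossPlan hγμ hγν⟩ ?_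
  exact lintegral_dinf_crossPlan_le γ μ ν

end UpperBound

section LowerBound

def upperHalf : Set (ℝ × ℝ) := {p | p.1 < p.2}

lemma measurableSet_upperHalf : MeasurableSet upperHalf :=
  measurableSet_lt measurable_fst measurable_snd

lemma map_piD_upperHalf (κ : Measure (ℝ × ℝ)) : κ.map piD upperHalf = 0 := by
  have hempty : piD ⁻¹' upperHalf = ∅ :=
    Set.eq_empty_of_forall_notMem fun p => lt_irrefl (piD p).1
  rw [Measure.map_apply measurable_piD measurableSet_upperHalf, hempty, measure_empty]

lemma map_fst_restrict_prod_add_prod_compl {α β : Type*} [MeasurableSpace α] [MeasurableSpace β]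
    (Γ : Measure (α × β)) {s : Set α} {t : Set β} (hs : MeasurableSet s) (ht : MeasurableSet t) :
    (Γ.restrict (s ×ˢ t)).map Prod.fst + (Γ.restrict (s ×ˢ tᶜ)).map Prod.fst
      = (Γ.map Prod.fst).restrict s := by
  rw [← Measure.map_add _ _ measurable_fst,
    ← Measure.restrict_union (Set.disjoint_prod.mpr (Or.inr disjoint_compl_right))
      (hs.prod ht.compl),
    ← Set.prod_union, Set.union_compl_self, Set.prod_univ, Measure.restrict_map measurable_fst hs]

lemma restrict_prod_map_swap {α β : Type*} [MeasurableSpace α] [MeasurableSpace β]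
    (Γ : Measure (α × β)) {s : Set β} {t : Set α} (hs : MeasurableSet s) (ht : MeasurableSet t) :
    (Γ.map Prod.swap).restrict (s ×ˢ t) = (Γ.restrict (t ×ˢ s)).map Prod.swap := by
  rw [Measure.restrict_map measurable_swap (hs.prod ht), Set.preimage_swap_prod]

variable {μ ν : Measure (ℝ × ℝ)} {Γ : Measure ((ℝ × ℝ) × (ℝ × ℝ))}

lemma restrict_upperHalf_add_map_piD (hμ : μ upperHalfᶜ = 0) :
    (μ + ν.map piD).restrict upperHalf = μ := by
  rw [Measure.restrict_add, Measure.restrict_eq_self_of_ae_mem (ae_iff.mpr hμ),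
    Measure.restrict_eq_zero.mpr (map_piD_upperHalf ν), add_zero]

lemma ae_fst_le_snd_add_map_piD (hν : ν upperHalfᶜ = 0) :
    ∀ᵐ q ∂(ν + μ.map piD), q.1 ≤ q.2 := by
  rw [ae_add_measure_iff, ae_map_iff measurable_piD.aemeasurable
    (measurableSet_le measurable_fst measurable_snd)]
  exact ⟨(ae_iff.mpr hν : ∀ᵐ q ∂ν, q ∈ upperHalf).mono fun q hq => hq.le,
    ae_of_all _ fun p => le_rfl⟩

lemma map_fst_restrict_upperHalf_prod_le (hμ : μ upperHalfᶜ = 0)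
    (hΓ₁ : Γ.map Prod.fst = μ + ν.map piD) :
    (Γ.restrict (upperHalf ×ˢ upperHalf)).map Prod.fst ≤ μ := by
  rw [← restrict_upperHalf_add_map_piD (ν := ν) hμ, ← hΓ₁,
    ← map_fst_restrict_prod_add_prod_compl Γ measurableSet_upperHalf measurableSet_upperHalf]
  exact Measure.le_add_right le_rfl

lemma lintegral_dinf_piD_sub_le (hμ : μ upperHalfᶜ = 0) (hν : ν upperHalfᶜ = 0)
    (hΓ₁ : Γ.map Prod.fst = μ + ν.map piD) (hΓ₂ : Γ.map Prod.snd = ν + μ.map piD) :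
    ∫⁻ p, ENNReal.ofReal (dinf p (piD p))
        ∂(μ - (Γ.restrict (upperHalf ×ˢ upperHalf)).map Prod.fst)
      ≤ ∫⁻ z in upperHalf ×ˢ upperHalfᶜ, ENNReal.ofReal (dinf z.1 z.2) ∂Γ := by
  have hμ_le : μ ≤ (Γ.restrict (upperHalf ×ˢ upperHalfᶜ)).map Prod.fst
      + (Γ.restrict (upperHalf ×ˢ upperHalf)).map Prod.fst := by
    rw [add_comm, map_fst_restrict_prod_add_prod_compl Γ measurableSet_upperHalf
      measurableSet_upperHalf, hΓ₁, restrict_upperHalf_add_map_piD hμ]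
  have hle : ∀ᵐ z ∂Γ, z.2.1 ≤ z.2.2 :=
    ae_of_ae_map measurable_snd.aemeasurable (hΓ₂ ▸ ae_fst_le_snd_add_map_piD hν)
  calc _ ≤ ∫⁻ p, ENNReal.ofReal (dinf p (piD p))
          ∂(Γ.restrict (upperHalf ×ˢ upperHalfᶜ)).map Prod.fst :=
        lintegral_mono' (Measure.sub_le_of_le_add hμ_le) le_rfl
    _ = ∫⁻ z in upperHalf ×ˢ upperHalfᶜ, ENNReal.ofReal (dinf z.1 (piD z.1)) ∂Γ :=
        lintegral_map measurable_dinf_piD.ennreal_ofReal measurable_fst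
    _ ≤ _ := by
        refine lintegral_mono_ae ?_
        filter_upwards [ae_restrict_mem
          (measurableSet_upperHalf.prod measurableSet_upperHalf.compl), ae_restrict_of_ae hle]
          with z hz hz_le
        have hz_diag : z.2 = (z.2.1, z.2.1) := Prod.ext rfl (le_antisymm (not_lt.mp hz.2) hz_le)
        rw [hz_diag]
        exact ofReal_le_ofReal (dinf_piD_le_dinf_diag _ _)

theorem POT_le_OT (hμ : μ upperHalfᶜ = 0) (hν : ν upperHalfᶜ = 0) :
    POT μ ν ≤ OT (μ + ν.map piD) (ν + μ.map piD) := by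
  refine le_iInf fun ⟨Γ, hΓ₁, hΓ₂⟩ => ?_
  have hU := measurableSet_upperHalf
  have hswap₁ : (Γ.map Prod.swap).map Prod.fst = ν + μ.map piD := Measure.fst_map_swap.trans hΓ₂
  have hswap₂ : (Γ.map Prod.swap).map Prod.snd = μ + ν.map piD := Measure.snd_map_swap.trans hΓ₁
  have hγ₂ : ((Γ.map Prod.swap).restrict (upperHalf ×ˢ upperHalf)).map Prod.fst
      = (Γ.restrict (upperHalf ×ˢ upperHalf)).map Prod.snd := by
    rw [restrict_prod_map_swap Γ hU hU, Measure.map_map measurable_fst measurable_swap]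
    rfl
  have hcost_swap : ∫⁻ z in upperHalf ×ˢ upperHalfᶜ, ENNReal.ofReal (dinf z.1 z.2) ∂Γ.map Prod.swap
      = ∫⁻ z in upperHalfᶜ ×ˢ upperHalf, ENNReal.ofReal (dinf z.1 z.2) ∂Γ := by
    rw [restrict_prod_map_swap Γ hU hU.compl,
      lintegral_map measurable_dinf.ennreal_ofReal measurable_swap]
    exact lintegral_congr fun z => by rw [Prod.fst_swap, Prod.snd_swap, dinf_comm]
  refine iInf_le_of_le ⟨Γ.restrict (upperHalf ×ˢ upperHalf),
    map_fst_restrict_upperHalf_prod_le hμ hΓ₁,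
    hγ₂ ▸ map_fst_restrict_upperHalf_prod_le hν hswap₁⟩ ?_
  calc planCost (Γ.restrict (upperHalf ×ˢ upperHalf)) μ ν
      ≤ ∫⁻ z in upperHalf ×ˢ upperHalf, ENNReal.ofReal (dinf z.1 z.2) ∂Γ
        + ∫⁻ z in upperHalf ×ˢ upperHalfᶜ, ENNReal.ofReal (dinf z.1 z.2) ∂Γ
        + ∫⁻ z in upperHalfᶜ ×ˢ upperHalf, ENNReal.ofReal (dinf z.1 z.2) ∂Γ := by
        rw [planCost]
        gcongr
        · exact lintegral_dinf_piD_sub_le hμ hν hΓ₁ hΓ₂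
        · rw [← hγ₂, ← hcost_swap]
          exact lintegral_dinf_piD_sub_le hν hμ hswap₁ hswap₂
    _ = ∫⁻ z in upperHalf ×ˢ upperHalf ∪ upperHalf ×ˢ upperHalfᶜ ∪ upperHalfᶜ ×ˢ upperHalf,
          ENNReal.ofReal (dinf z.1 z.2) ∂Γ := by
        rw [lintegral_union (hU.compl.prod hU) (Set.disjoint_union_left.mpr
            ⟨Set.disjoint_prod.mpr (Or.inl disjoint_compl_right),
              Set.disjoint_prod.mpr (Or.inl disjoint_compl_right)⟩),
          lintegral_union (hU.prod hU.compl) (Set.disjoint_prod.mpr (Or.inr disjoint_compl_right))]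
    _ ≤ _ := setLIntegral_le_lintegral _ _

end LowerBound

theorem pot_le_ot_crossAug_le_two_pot_general
    (μ ν : Measure (ℝ × ℝ)) (hμfin : IsFiniteMeasure μ) (hνfin : IsFiniteMeasure ν)
    (hμX : μ {p : ℝ × ℝ | ¬ p.1 < p.2} = 0) (hνX : ν {p : ℝ × ℝ | ¬ p.1 < p.2} = 0) :
    POT μ ν ≤ OT (μ + ν.map piD) (ν + μ.map piD) ∧
    OT (μ + ν.map piD) (ν + μ.map piD) ≤ 2 * POT μ ν :=
  ⟨POT_le_OT hμX hνX, OT_le_two_mul_POT⟩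

/-- For integrable measures `μ, ν` on `X = {x < y}`:
`POT₁(μ,ν) ≤ OT₁(μ ⊕_Δ ν, ν ⊕_Δ μ) ≤ 2 POT₁(μ,ν)`. -/
theorem pot_le_ot_crossAug_le_two_pot
    (μ ν : Measure (ℝ × ℝ)) (hμfin : IsFiniteMeasure μ) (hνfin : IsFiniteMeasure ν)
    (hμX : μ {p : ℝ × ℝ | ¬ p.1 < p.2} = 0) (hνX : ν {p : ℝ × ℝ | ¬ p.1 < p.2} = 0)
    (hμint : ∫⁻ p, ENNReal.ofReal (enorm2 p) ∂μ < ⊤)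
    (hνint : ∫⁻ p, ENNReal.ofReal (enorm2 p) ∂ν < ⊤) :
    POT μ ν ≤ OT (μ + ν.map piD) (ν + μ.map piD) ∧
    OT (μ + ν.map piD) (ν + μ.map piD) ≤ 2 * POT μ ν :=
  pot_le_ot_crossAug_le_two_pot_general μ ν hμfin hνfin hμX hνX
end

section
/- Hinge-function identity: for δ ≥ 0 set t_δ := √(2/(1+2δ²)) and v_δ := (−δ t_δ, −t_δ/2, t_δ/2) ∈ S². Then for every integrable positive measure η on X, S(η)(v_δ) = t_δ · ∫_X max(pers(p) − δ, 0) dη(p). -/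
open MeasureTheory

noncomputable def inner3 (v a : ℝ × ℝ × ℝ) : ℝ :=
  v.1 * a.1 + v.2.1 * a.2.1 + v.2.2 * a.2.2

def lift (p : ℝ × ℝ) : ℝ × ℝ × ℝ := (1, p.1, p.2)

/-- The persistence `pers(p) = (y−x)/2`. -/
noncomputable def pers (p : ℝ × ℝ) : ℝ := (p.2 - p.1) / 2

/-- `t_δ = √(2/(1+2δ²))`. -/
noncomputable def tdelta (δ : ℝ) : ℝ := Real.sqrt (2 / (1 + 2 * δ ^ 2))

/-- `v_δ = (−δ t_δ, −t_δ/2, t_δ/2) ∈ S²`. -/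
noncomputable def vdelta (δ : ℝ) : ℝ × ℝ × ℝ :=
  (-(δ * tdelta δ), -(tdelta δ / 2), tdelta δ / 2)

theorem tdelta_nonneg (δ : ℝ) : 0 ≤ tdelta δ := Real.sqrt_nonneg _

theorem pers_piD (p : ℝ × ℝ) : pers (piD p) = 0 := by
  simp only [pers, piD, sub_self, zero_div]

theorem inner3_vdelta_lift (δ : ℝ) (p : ℝ × ℝ) :
    inner3 (vdelta δ) (lift p) = tdelta δ * (pers p - δ) := by
  simp only [inner3, vdelta, lift, pers]
  ring

theorem max_zero_inner3_vdelta_lift_piD {δ : ℝ} (hδ : 0 ≤ δ) (p : ℝ × ℝ) :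
    max 0 (inner3 (vdelta δ) (lift (piD p))) = 0 := by
  rw [inner3_vdelta_lift, pers_piD, zero_sub, mul_neg]
  exact max_eq_left (neg_nonpos.mpr (mul_nonneg (tdelta_nonneg δ) hδ))

theorem hinge_integrand_eq {δ : ℝ} (hδ : 0 ≤ δ) (p : ℝ × ℝ) :
    max 0 (inner3 (vdelta δ) (lift p)) - max 0 (inner3 (vdelta δ) (lift (piD p))) =
      tdelta δ * max (pers p - δ) 0 := by
  rw [max_zero_inner3_vdelta_lift_piD hδ, sub_zero, inner3_vdelta_lift, max_comm,
    mul_max_of_nonneg _ _ (tdelta_nonneg δ), mul_zero]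

theorem hinge_identity_general
    (δ : ℝ) (hδ : 0 ≤ δ)
    (η : Measure (ℝ × ℝ)) :
    (∫ p, (max 0 (inner3 (vdelta δ) (lift p)) -
        max 0 (inner3 (vdelta δ) (lift (piD p)))) ∂η) =
      tdelta δ * ∫ p, max (pers p - δ) 0 ∂η := by
  simp_rw [hinge_integrand_eq hδ]
  exact integral_const_mul _ _

/-- Hinge-function identity: for `δ ≥ 0` and every integrable positive measure `η` on
`X = {x < y}`, `S(η)(v_δ) = t_δ ∫ (pers − δ)₊ dη`. -/
theorem hinge_identity
    (δ : ℝ) (hδ : 0 ≤ δ)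
    (η : Measure (ℝ × ℝ)) (hηfin : IsFiniteMeasure η)
    (hηX : η {p : ℝ × ℝ | ¬ p.1 < p.2} = 0)
    (hηint : Integrable enorm2 η) :
    (∫ p, (max 0 (inner3 (vdelta δ) (lift p)) -
        max 0 (inner3 (vdelta δ) (lift (piD p)))) ∂η) =
      tdelta δ * ∫ p, max (pers p - δ) 0 ∂η :=
  hinge_identity_general δ hδ η
end
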